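/- Let 0 < α < β ≤ 1 and define ψ : ℝ → ℝ by ψ(t) = (α/β)·sinh((β − α)t)/(cosh(βt)·sinh(αt)) for t ≠ 0 and ψ(0) = (β − α)/β. Then for all t ∈ ℝ: 0 ≤ ψ(t) ≤ min( (β − α)/β , 1/(β·|t|) ), where the second bound is read as +∞ at t = 0. -/

import Mathlib

/-!
By evenness it suffices to take `t > 0`; put `a = αt < b = βt`. Expanding
`sinh (b - a)`, the bound `ψ ≤ (β - α)/β` becomes `a tanh b ≤ b tanh a`, which follows from
the monotonicity of `sinh x / x` (convexity of `sinh` on `[0, ∞)`) applied to `b - a ≤ b + a`.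
The bound `ψ ≤ 1/(βt)` is `a sinh (b - a) ≤ sinh a cosh b`, from `a ≤ sinh a` and
`sinh (b - a) ≤ sinh b ≤ cosh b`.
-/

open Real Set

lemma Real.convexOn_sinh_Ici : ConvexOn ℝ (Ici 0) sinh :=
  MonotoneOn.convexOn_of_deriv (convex_Ici 0) continuous_sinh.continuousOn
    differentiable_sinh.differentiableOn <| by
      rw [deriv_sinh, interior_Ici]
      exact cosh_strictMonoOn.monotoneOn.mono Ioi_subset_Ici_self

lemma Real.mul_sinh_le_mul_sinh {u v : ℝ} (hu : 0 < u) (huv : u ≤ v) :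
    v * sinh u ≤ u * sinh v := by
  have hv : 0 < v := hu.trans_le huv
  have h := convexOn_sinh_Ici.secant_mono (a := 0) self_mem_Ici hu.le hv.le hu.ne' hv.ne' huv
  simp only [sinh_zero, sub_zero] at h
  rw [div_le_div_iff₀ hu hv] at h
  linarith

lemma Real.mul_sinh_mul_cosh_le {a b : ℝ} (ha : 0 ≤ a) (hab : a < b) :
    a * (sinh b * cosh a) ≤ b * (sinh a * cosh b) := by
  have h := mul_sinh_le_mul_sinh (u := b - a) (v := b + a) (by linarith) (by linarith)
  rw [sinh_sub, sinh_add] at h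
  linear_combination h / 2

noncomputable def psi (α β t : ℝ) : ℝ :=
  α / β * sinh ((β - α) * t) / (cosh (β * t) * sinh (α * t))

lemma psi_abs (α β t : ℝ) : psi α β |t| = psi α β t := by
  rcases abs_choice t with h | h <;> rw [h]
  simp only [psi, mul_neg, sinh_neg, cosh_neg]
  ring

section

variable {α β t : ℝ} (hα : 0 < α) (hαβ : α < β) (ht : 0 < t)
include hα hαβ ht

lemma psi_nonneg : 0 ≤ psi α β t := by
  have hβ : 0 < β := hα.trans hαβ
  have hS : 0 ≤ sinh ((β - α) * t) := sinh_nonneg_iff.2 (mul_nonneg (sub_nonneg.2 hαβ.le) ht.le)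
  have hs : 0 ≤ sinh (α * t) := sinh_nonneg_iff.2 (by positivity)
  unfold psi
  positivity

lemma psi_le_sub_div : psi α β t ≤ (β - α) / β := by
  have hβ : 0 < β := hα.trans hαβ
  have hden : 0 < cosh (β * t) * sinh (α * t) :=
    mul_pos (cosh_pos _) (sinh_pos_iff.2 (by positivity))
  have key := mul_sinh_mul_cosh_le (mul_pos hα ht).le (mul_lt_mul_of_pos_right hαβ ht)
  rw [psi, div_le_div_iff₀ hden hβ, show (β - α) * t = β * t - α * t by ring, sinh_sub]
  field_simp
  linarith [le_of_mul_le_mul_right (by linarith only [key] :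
    α * (sinh (β * t) * cosh (α * t)) * t ≤ β * (sinh (α * t) * cosh (β * t)) * t) ht]

lemma psi_le_one_div : psi α β t ≤ 1 / (β * t) := by
  have hβ : 0 < β := hα.trans hαβ
  have hs : 0 < sinh (α * t) := sinh_pos_iff.2 (by positivity)
  have hden : 0 < cosh (β * t) * sinh (α * t) := mul_pos (cosh_pos _) hs
  have hS : 0 ≤ sinh ((β - α) * t) := sinh_nonneg_iff.2 (mul_nonneg (sub_nonneg.2 hαβ.le) ht.le)
  have hSC : sinh ((β - α) * t) ≤ cosh (β * t) :=
    (sinh_le_sinh.2 (mul_le_mul_of_nonneg_right (by linarith) ht.le)).trans (sinh_lt_cosh _).le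
  have := mul_le_mul (self_le_sinh_iff.2 (mul_pos hα ht).le) hSC hS hs.le
  rw [psi, div_le_div_iff₀ hden (by positivity)]
  field_simp
  linarith

end

theorem statement18_general (α β : ℝ) (hα : 0 < α) (hαβ : α < β)
    (ψ : ℝ → ℝ) (hψ0 : ψ 0 = (β - α) / β)
    (hψ : ∀ t : ℝ, t ≠ 0 →
      ψ t = (α / β) * Real.sinh ((β - α) * t) / (Real.cosh (β * t) * Real.sinh (α * t))) :
    ∀ t : ℝ, 0 ≤ ψ t ∧ ψ t ≤ (β - α) / β ∧ (t ≠ 0 → ψ t ≤ 1 / (β * |t|)) := by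
  intro t
  rcases eq_or_ne t 0 with rfl | ht
  · rw [hψ0]
    exact ⟨div_nonneg (sub_nonneg.2 hαβ.le) (hα.trans hαβ).le, le_rfl, fun h => absurd rfl h⟩
  · have hψt : ψ t = psi α β |t| := by rw [psi_abs, hψ t ht]; rfl
    have habs : 0 < |t| := abs_pos.2 ht
    rw [hψt]
    exact ⟨psi_nonneg hα hαβ habs, psi_le_sub_div hα hαβ habs,
      fun _ => psi_le_one_div hα hαβ habs⟩

/-- For `0 < α < β ≤ 1`, the function
`ψ(t) = (α/β)·sinh((β-α)t)/(cosh(βt)·sinh(αt))` for `t ≠ 0`, `ψ(0) = (β-α)/β`,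
satisfies `0 ≤ ψ(t) ≤ min((β-α)/β, 1/(β|t|))` (the second bound read as `+∞` at `t = 0`). -/
theorem statement18 (α β : ℝ) (hα : 0 < α) (hαβ : α < β) (hβ : β ≤ 1)
    (ψ : ℝ → ℝ) (hψ0 : ψ 0 = (β - α) / β)
    (hψ : ∀ t : ℝ, t ≠ 0 →
      ψ t = (α / β) * Real.sinh ((β - α) * t) / (Real.cosh (β * t) * Real.sinh (α * t))) :
    ∀ t : ℝ, 0 ≤ ψ t ∧ ψ t ≤ (β - α) / β ∧ (t ≠ 0 → ψ t ≤ 1 / (β * |t|)) :=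
  statement18_general α β hα hαβ ψ hψ0 hψ
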